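/- Let n ≥ 3 and 2n/(n+2) < p ≤ 2. There exists a constant c = c(n,p) such that for every x₀ ∈ ℝⁿ, every 0 < R₀ < 1, every vector field W ∈ L^{2p/(2−p)}(B_{R₀}(x₀)), every u ∈ C^1(B_{R₀}(x₀)) and every τ > 0, one has ‖(log r) e^{−τφ(r)} r² W·∇u‖_{L^p(B_{R₀}(x₀), r^{−n}dx)} ≤ c ‖W‖_{L^{2p/(2−p)}(B_{R₀}(x₀))} ‖(log r)^{−1} e^{−τφ(r)} r ∇u‖_{L^2(B_{R₀}(x₀), r^{−n}dx)}. -/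

import Mathlib

open MeasureTheory Metric ENNReal

noncomputable section

/-- The `i`-th partial derivative of `u`. -/
def pderivC {n : ℕ} (u : EuclideanSpace ℝ (Fin n) → ℂ) (i : Fin n)
    (x : EuclideanSpace ℝ (Fin n)) : ℂ :=
  fderiv ℝ u x (EuclideanSpace.single i 1)

/-- The Laplacian of `u`. -/
def lapl {n : ℕ} (u : EuclideanSpace ℝ (Fin n) → ℂ) (x : EuclideanSpace ℝ (Fin n)) : ℂ :=
  ∑ i, fderiv ℝ (fderiv ℝ u) x (EuclideanSpace.single i 1) (EuclideanSpace.single i 1)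

/-- The (Euclidean) norm of the gradient of `u`. -/
def gradN {n : ℕ} (u : EuclideanSpace ℝ (Fin n) → ℂ) (x : EuclideanSpace ℝ (Fin n)) : ℝ :=
  Real.sqrt (∑ i, ‖pderivC u i x‖ ^ 2)

/-- The term `W · ∇u`. -/
def Wgrad {n : ℕ} (W : EuclideanSpace ℝ (Fin n) → EuclideanSpace ℂ (Fin n))
    (u : EuclideanSpace ℝ (Fin n) → ℂ) (x : EuclideanSpace ℝ (Fin n)) : ℂ :=
  ∑ i, W x i * pderivC u i x

/-- `u` is a solution of `Δu + W·∇u + Vu = 0` on `B`: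
`u ∈ L^∞_loc(B) ∩ W^{1,2}_loc(B) ∩ W^{2,p}_loc(B)` for some `p ∈ (2n/(n+2), 2]`, and the
equation holds a.e. on `B`. -/
def IsSolution {n : ℕ} (B : Set (EuclideanSpace ℝ (Fin n)))
    (W : EuclideanSpace ℝ (Fin n) → EuclideanSpace ℂ (Fin n))
    (V : EuclideanSpace ℝ (Fin n) → ℂ)
    (u : EuclideanSpace ℝ (Fin n) → ℂ) : Prop :=
  ∃ p : ℝ, 2 * (n : ℝ) / (n + 2) < p ∧ p ≤ 2 ∧
    (∀ Kc : Set (EuclideanSpace ℝ (Fin n)), Kc ⊆ B → IsCompact Kc →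
      eLpNorm u ⊤ (volume.restrict Kc) < ⊤ ∧
      eLpNorm u 2 (volume.restrict Kc) < ⊤ ∧
      eLpNorm (fun x => gradN u x) 2 (volume.restrict Kc) < ⊤ ∧
      eLpNorm (fun x => ‖fderiv ℝ (fderiv ℝ u) x‖) (ENNReal.ofReal p) (volume.restrict Kc) < ⊤) ∧
    (∀ᵐ x ∂(volume.restrict B),
      DifferentiableAt ℝ u x ∧ DifferentiableAt ℝ (fderiv ℝ u) x ∧
      lapl u x + Wgrad W u x + V x * u x = 0)

/-- The weight function `φ(r) = log r + log ((log r)^2)`. -/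
def phiC (r : ℝ) : ℝ := Real.log r + Real.log ((Real.log r) ^ 2)

/-- `1/s` for an extended-real exponent `s`, interpreted as `0` when `s = ∞`. -/
def inva (s : ℝ≥0∞) : ℝ := s⁻¹.toReal

/-- The weighted norm `‖g‖_{L^p(E, r^{-n} dx)}` (here `g` stands for the pointwise absolute
value of the function being measured). -/
def wLp {n : ℕ} (x₀ : EuclideanSpace ℝ (Fin n)) (p : ℝ)
    (g : EuclideanSpace ℝ (Fin n) → ℝ) (E : Set (EuclideanSpace ℝ (Fin n))) : ℝ≥0∞ :=
  (∫⁻ x in E, ENNReal.ofReal (|g x| ^ p * ‖x - x₀‖ ^ (-(n : ℝ)))) ^ (1 / p)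

/-! With `a = 1 + n/2 - n/p > 0`, the elementary bound `(log r)² r^a ≤ 4/a²` on `[0, 1]` shows that
the weight `|log r| r² r^(-n/p)` on the left is at most `4/a²` times the weight
`|log r|⁻¹ r r^(-n/2)` on the right. Together with Cauchy–Schwarz `|W·∇u| ≤ |W| |∇u|`, this
reduces the estimate to Hölder's inequality for `1/p = (2-p)/(2p) + 1/2`. -/

lemma log_sq_mul_rpow_le {a r : ℝ} (ha : 0 < a) (hr0 : 0 ≤ r) (hr1 : r ≤ 1) :
    Real.log r ^ 2 * r ^ a ≤ 4 / a ^ 2 := by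
  rcases hr0.eq_or_lt with rfl | hr0
  · simp; positivity
  have h := Real.abs_log_mul_self_rpow_lt r (a / 2) hr0 hr1 (by positivity)
  calc Real.log r ^ 2 * r ^ a = |Real.log r * r ^ (a / 2)| ^ 2 := by
        rw [sq_abs, mul_pow, ← Real.rpow_mul_natCast hr0.le]; norm_num
    _ ≤ (1 / (a / 2)) ^ 2 := pow_le_pow_left₀ (abs_nonneg _) h.le 2
    _ = 4 / a ^ 2 := by ring

lemma abs_log_mul_rpow_le {r α β : ℝ} (hαβ : 0 < 1 + α - β) (hr0 : 0 ≤ r) (hr1 : r ≤ 1) :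
    |Real.log r| * (r ^ 2 * r ^ α) ≤
      4 / (1 + α - β) ^ 2 * (|Real.log r|⁻¹ * (r * r ^ β)) := by
  by_cases hlog : Real.log r = 0
  · simp [hlog]
  have hr : 0 < r := hr0.lt_of_ne (by rintro rfl; simp at hlog)
  have hsplit : r ^ 2 * r ^ α = r ^ (1 + α - β) * (r * r ^ β) := by
    rw [← Real.rpow_natCast, ← Real.rpow_add hr,
      show r * r ^ β = r ^ (1 + β) by rw [Real.rpow_add hr, Real.rpow_one], ← Real.rpow_add hr]
    ring_nf
  calc |Real.log r| * (r ^ 2 * r ^ α)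
      = (Real.log r ^ 2 * r ^ (1 + α - β)) * (|Real.log r|⁻¹ * (r * r ^ β)) := by
        rw [hsplit, ← sq_abs]; field_simp
    _ ≤ 4 / (1 + α - β) ^ 2 * (|Real.log r|⁻¹ * (r * r ^ β)) := by
        gcongr
        exact log_sq_mul_rpow_le hαβ hr0 hr1

lemma norm_Wgrad_le {n : ℕ} (W : EuclideanSpace ℝ (Fin n) → EuclideanSpace ℂ (Fin n))
    (u : EuclideanSpace ℝ (Fin n) → ℂ) (x : EuclideanSpace ℝ (Fin n)) :
    ‖Wgrad W u x‖ ≤ ‖W x‖ * gradN u x :=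
  calc ‖Wgrad W u x‖ ≤ ∑ i, ‖W x i‖ * ‖pderivC u i x‖ :=
        (norm_sum_le _ _).trans_eq (by simp only [norm_mul])
    _ ≤ √(∑ i, ‖W x i‖ ^ 2) * √(∑ i, ‖pderivC u i x‖ ^ 2) :=
        Real.sum_mul_le_sqrt_mul_sqrt _ _ _
    _ = ‖W x‖ * gradN u x := by rw [EuclideanSpace.norm_eq, gradN]

lemma measurable_gradN {n : ℕ} (u : EuclideanSpace ℝ (Fin n) → ℂ) : Measurable (gradN u) := by
  unfold gradN pderivC
  fun_prop

lemma wLp_eq_eLpNorm {n : ℕ} (x₀ : EuclideanSpace ℝ (Fin n)) {q : ℝ} (hq : 0 < q)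
    (g : EuclideanSpace ℝ (Fin n) → ℝ) (E : Set (EuclideanSpace ℝ (Fin n))) :
    wLp x₀ q g E =
      eLpNorm (fun x => g x * ‖x - x₀‖ ^ (-(n : ℝ) / q)) (ENNReal.ofReal q) (volume.restrict E) := by
  rw [eLpNorm_eq_lintegral_rpow_enorm_toReal (by simp [hq]) (by simp), ENNReal.toReal_ofReal hq.le,
    wLp]
  congr 1
  refine lintegral_congr fun x => ?_
  have hw : 0 ≤ ‖x - x₀‖ ^ (-(n : ℝ) / q) := by positivity
  rw [← ofReal_norm, ENNReal.ofReal_rpow_of_nonneg (norm_nonneg _) hq.le, Real.norm_eq_abs,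
    abs_mul, abs_of_nonneg hw, Real.mul_rpow (abs_nonneg _) hw, ← Real.rpow_mul (norm_nonneg _),
    div_mul_cancel₀ _ hq.ne']

lemma holderTriple_ofReal {p : ℝ} (hp : 0 < p) (hp2 : p ≤ 2) :
    ENNReal.HolderTriple (ENNReal.ofReal (2 * p) / ENNReal.ofReal (2 - p)) (ENNReal.ofReal 2)
      (ENNReal.ofReal p) := by
  constructor
  rcases hp2.eq_or_lt with rfl | hp2
  · norm_num [ENNReal.div_zero]
  rw [← ENNReal.ofReal_div_of_pos (by linarith), ← ENNReal.ofReal_inv_of_pos (by positivity),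
    ← ENNReal.ofReal_inv_of_pos two_pos, ← ENNReal.ofReal_add (by positivity) (by positivity),
    ← ENNReal.ofReal_inv_of_pos hp]
  congr 1
  field_simp
  ring

lemma norm_drift_le {n : ℕ} (W : EuclideanSpace ℝ (Fin n) → EuclideanSpace ℂ (Fin n))
    (u : EuclideanSpace ℝ (Fin n) → ℂ) {x₀ x : EuclideanSpace ℝ (Fin n)} (hx : ‖x - x₀‖ ≤ 1)
    {e α β : ℝ} (he : 0 ≤ e) (hαβ : 0 < 1 + α - β) :
    ‖Real.log ‖x - x₀‖ * e * (‖x - x₀‖ ^ 2 * ‖Wgrad W u x‖) * ‖x - x₀‖ ^ α‖ ≤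
      4 / (1 + α - β) ^ 2 * ‖W x‖ *
        ‖(Real.log ‖x - x₀‖)⁻¹ * e * (‖x - x₀‖ * gradN u x) * ‖x - x₀‖ ^ β‖ := by
  set r := ‖x - x₀‖
  have hr : 0 ≤ r := norm_nonneg _
  have hgrad : 0 ≤ gradN u x := Real.sqrt_nonneg _
  simp only [norm_mul, norm_inv, norm_pow, abs_norm, Real.norm_eq_abs, abs_of_nonneg he,
    abs_of_nonneg hr, abs_of_nonneg hgrad, abs_of_nonneg (Real.rpow_nonneg hr _)]
  calc |Real.log r| * e * (r ^ 2 * ‖Wgrad W u x‖) * r ^ α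
      = e * ‖Wgrad W u x‖ * (|Real.log r| * (r ^ 2 * r ^ α)) := by ring
    _ ≤ e * (‖W x‖ * gradN u x) * (4 / (1 + α - β) ^ 2 * (|Real.log r|⁻¹ * (r * r ^ β))) := by
        gcongr e * ?_ * ?_
        · exact norm_Wgrad_le W u x
        · exact abs_log_mul_rpow_le hαβ hr hx
    _ = 4 / (1 + α - β) ^ 2 * ‖W x‖ * (|Real.log r|⁻¹ * e * (r * gradN u x) * r ^ β) := by ring

theorem statement13_general (n : ℕ) (p : ℝ)
    (hp : 2 * (n : ℝ) / (n + 2) < p) (hp2 : p ≤ 2) :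
    ∃ c : ℝ, 0 < c ∧
      ∀ (x₀ : EuclideanSpace ℝ (Fin n)) (R₀ : ℝ), 0 < R₀ → R₀ < 1 →
      ∀ (W : EuclideanSpace ℝ (Fin n) → EuclideanSpace ℂ (Fin n))
        (u : EuclideanSpace ℝ (Fin n) → ℂ),
        MemLp W (ENNReal.ofReal (2 * p) / ENNReal.ofReal (2 - p))
          (volume.restrict (ball x₀ R₀)) →
        ContDiffOn ℝ 1 u (ball x₀ R₀) →
        ∀ τ : ℝ, 0 < τ →
          wLp x₀ p (fun x => Real.log ‖x - x₀‖ * Real.exp (-τ * phiC ‖x - x₀‖) *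
              (‖x - x₀‖ ^ 2 * ‖Wgrad W u x‖)) (ball x₀ R₀) ≤
            ENNReal.ofReal c *
              eLpNorm W (ENNReal.ofReal (2 * p) / ENNReal.ofReal (2 - p))
                (volume.restrict (ball x₀ R₀)) *
              wLp x₀ 2 (fun x => (Real.log ‖x - x₀‖)⁻¹ * Real.exp (-τ * phiC ‖x - x₀‖) *
                (‖x - x₀‖ * gradN u x)) (ball x₀ R₀) := by
  have hp0 : 0 < p := (by positivity : 0 ≤ 2 * (n : ℝ) / (n + 2)).trans_lt hp
  have ha : 0 < 1 + -(n : ℝ) / p - -(n : ℝ) / 2 := by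
    rw [div_lt_iff₀ (by positivity)] at hp
    have : 1 + -(n : ℝ) / p - -(n : ℝ) / 2 = (p * (n + 2) - 2 * n) / (2 * p) := by
      field_simp; ring
    rw [this]; exact div_pos (by linarith) (by positivity)
  set C := 4 / (1 + -(n : ℝ) / p - -(n : ℝ) / 2) ^ 2
  refine ⟨C, by positivity, fun x₀ R₀ _ hR₀ W u hW _ τ _ => ?_⟩
  have hpqr := holderTriple_ofReal hp0 hp2
  rw [wLp_eq_eLpNorm x₀ hp0, wLp_eq_eLpNorm x₀ two_pos]
  calc _ ≤ eLpNorm (fun x => C.toNNReal * ‖W x‖ *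
          ‖(Real.log ‖x - x₀‖)⁻¹ * Real.exp (-τ * phiC ‖x - x₀‖) * (‖x - x₀‖ * gradN u x) *
            ‖x - x₀‖ ^ (-(n : ℝ) / 2)‖) (ENNReal.ofReal p) (volume.restrict (ball x₀ R₀)) := by
        refine eLpNorm_mono_ae_real (ae_restrict_of_forall_mem measurableSet_ball fun x hx => ?_)
        rw [Real.coe_toNNReal _ (by positivity)]
        exact norm_drift_le W u ((mem_ball_iff_norm.mp hx).le.trans hR₀.le) (Real.exp_pos _).le ha
    _ ≤ _ := by
        refine eLpNorm_le_eLpNorm_mul_eLpNorm'_of_norm hW.1 ?_ (fun w s => C.toNNReal * ‖w‖ * ‖s‖)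
          C.toNNReal (.of_forall fun x => by simp [abs_of_nonneg (le_max_right C 0)])
        have hgrad := measurable_gradN u
        unfold phiC
        exact Measurable.aestronglyMeasurable (by fun_prop)

/-- inequality (3.3)/(3.7): weighted Hölder estimate for the drift term. -/
theorem statement13 (n : ℕ) (hn : 3 ≤ n) (p : ℝ)
    (hp : 2 * (n : ℝ) / (n + 2) < p) (hp2 : p ≤ 2) :
    ∃ c : ℝ, 0 < c ∧
      ∀ (x₀ : EuclideanSpace ℝ (Fin n)) (R₀ : ℝ), 0 < R₀ → R₀ < 1 →
      ∀ (W : EuclideanSpace ℝ (Fin n) → EuclideanSpace ℂ (Fin n))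
        (u : EuclideanSpace ℝ (Fin n) → ℂ),
        MemLp W (ENNReal.ofReal (2 * p) / ENNReal.ofReal (2 - p))
          (volume.restrict (ball x₀ R₀)) →
        ContDiffOn ℝ 1 u (ball x₀ R₀) →
        ∀ τ : ℝ, 0 < τ →
          wLp x₀ p (fun x => Real.log ‖x - x₀‖ * Real.exp (-τ * phiC ‖x - x₀‖) *
              (‖x - x₀‖ ^ 2 * ‖Wgrad W u x‖)) (ball x₀ R₀) ≤
            ENNReal.ofReal c *
              eLpNorm W (ENNReal.ofReal (2 * p) / ENNReal.ofReal (2 - p))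
                (volume.restrict (ball x₀ R₀)) *
              wLp x₀ 2 (fun x => (Real.log ‖x - x₀‖)⁻¹ * Real.exp (-τ * phiC ‖x - x₀‖) *
                (‖x - x₀‖ * gradN u x)) (ball x₀ R₀) :=
  statement13_general n p hp hp2
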